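/- For 0 ≤ s ≤ t ≤ 1, define Γ(s,t) = 4s(4t − 2t² − st − s²/3) if s+t ≤ 1 and Γ(s,t) = 4{s(1−s+2t−t²) − (1−t)³/3} if s+t > 1, extended symmetrically. Then for all s,t ∈ [0,1], |n Σ_{i=1}^n ν_{ni}(s)ν_{ni}(t) − Γ(s,t)| ≤ C n⁻¹ for an absolute constant C. -/

import Mathlib

/-!
With `a = ⌊n s⌋ ≤ b = ⌊n t⌋`, `(n² - n) ν_{n,x+1}(s) / 2 = windowCount n a x`. Writing
`min a x = a - (a - x)⁺` and reflecting `x ↦ n - 1 - x` reduces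
`∑ₓ windowCount n a x * windowCount n b x` to telescoping sums of hinge functions, hence to an
exact cubic in `a`, `b`, `n` and `(a + b - n)⁺`.
That cubic is `n³ Γ(a/n, b/n) + O(n²)`, so the normalised sum is `Γ(a/n, b/n) + O(1/n)`;
finally `Γ` is Lipschitz on `[0,1]²` and `|s - a/n|, |t - b/n| ≤ 1/n`.
-/

open Finset

noncomputable def u (n : ℕ) (t : ℝ) : ℝ :=
  ((⌊(n : ℝ) * t⌋ * (2 * (n : ℤ) - ⌊(n : ℝ) * t⌋ - 1) : ℤ) : ℝ) / ((n : ℝ) ^ 2 - n)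

noncomputable def nu (n i : ℕ) (t : ℝ) : ℝ :=
  2 * ((min ⌊(n : ℝ) * t⌋ ((i : ℤ) - 1) + min ⌊(n : ℝ) * t⌋ ((n : ℤ) - i) : ℤ) : ℝ) /
    ((n : ℝ) ^ 2 - n)

/-- The limiting covariance function `Γ` of Lemma 1, extended symmetrically. -/
noncomputable def Gam (s t : ℝ) : ℝ :=
  if s ≤ t then
    (if s + t ≤ 1 then 4 * s * (4 * t - 2 * t ^ 2 - s * t - s ^ 2 / 3)
     else 4 * (s * (1 - s + 2 * t - t ^ 2) - (1 - t) ^ 3 / 3))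
  else
    (if t + s ≤ 1 then 4 * t * (4 * s - 2 * s ^ 2 - t * s - t ^ 2 / 3)
     else 4 * (t * (1 - t + 2 * s - s ^ 2) - (1 - s) ^ 3 / 3))

section HingeSums

variable (n : ℕ)

lemma sum_range_sub_sub_one {M : Type*} [AddCommGroup M] (F : ℤ → M) (A : ℤ) :
    ∑ x ∈ range n, (F (A - x) - F (A - x - 1)) = F A - F (A - n) := by
  have h := sum_range_sub' (fun x : ℕ => F (A - x)) n
  simp only [Nat.cast_add, Nat.cast_one, Nat.cast_zero, sub_zero, ← sub_sub] at h
  exact h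

lemma sum_range_reflect_int {M : Type*} [AddCommMonoid M] (g : ℤ → M) :
    ∑ x ∈ range n, g (n - 1 - x) = ∑ x ∈ range n, g x := by
  rw [← sum_range_reflect (fun x : ℕ => g x) n]
  refine sum_congr rfl fun x hx => congrArg g ?_
  have := mem_range.mp hx
  omega

variable {n}

lemma two_mul_sum_range_max_sub {A : ℤ} (hA : A ≤ n) :
    2 * ∑ x ∈ range n, max (A - x) 0 = max A 0 * (max A 0 + 1) := by
  set T : ℤ → ℤ := fun y => max y 0 * (max y 0 + 1)
  have step (y : ℤ) : 2 * max y 0 = T y - T (y - 1) := by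
    rcases le_or_gt y 0 with h | h
    · simp only [T, max_eq_right h, max_eq_right (show y - 1 ≤ 0 by omega)]; ring
    · simp only [T, max_eq_left h.le, max_eq_left (show 0 ≤ y - 1 by omega)]; ring
  rw [mul_sum, sum_congr rfl fun (x : ℕ) _ => step (A - x), sum_range_sub_sub_one]
  simp only [T, max_eq_right (show A - n ≤ 0 by omega)]
  ring

lemma six_mul_sum_range_max_sub_mul_max_sub {A B : ℤ} (hAB : A ≤ B) (hA : A ≤ n) :
    6 * ∑ x ∈ range n, max (A - x) 0 * max (B - x) 0
      = max A 0 * (max A 0 + 1) * (3 * B - max A 0 + 1) := by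
  set U : ℤ → ℤ := fun y => max y 0 * (max y 0 + 1) * (3 * (y + (B - A)) - max y 0 + 1)
  have step (y : ℤ) : 6 * (max y 0 * max (y + (B - A)) 0) = U y - U (y - 1) := by
    rcases le_or_gt y 0 with h | h
    · simp only [U, max_eq_right h, max_eq_right (show y - 1 ≤ 0 by omega)]; ring
    · simp only [U, max_eq_left h.le, max_eq_left (show 0 ≤ y - 1 by omega),
        max_eq_left (show 0 ≤ y + (B - A) by omega)]
      ring
  have hshift (x : ℕ) : B - x = A - x + (B - A) := by ring
  rw [mul_sum, sum_congr rfl fun (x : ℕ) _ => by rw [hshift, step (A - x)], sum_range_sub_sub_one]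
  simp only [U, max_eq_right (show A - n ≤ 0 by omega)]
  ring

end HingeSums

section MinSums

variable {n : ℕ} {a b : ℤ}

lemma six_mul_sum_range_min_mul_min (ha : 0 ≤ a) (hab : a ≤ b) (hb : b ≤ n) :
    6 * ∑ x ∈ range n, min a x * min b x
      = 6 * n * a * b - 3 * a * b * (b + 1) - 3 * b * a * (a + 1)
        + a * (a + 1) * (3 * b - a + 1) := by
  have hterm (x : ℕ) : min a x * min b x
      = a * b - a * max (b - x) 0 - b * max (a - x) 0 + max (a - x) 0 * max (b - x) 0 := by
    rw [show min a (x : ℤ) = a - max (a - x) 0 by omega,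
      show min b (x : ℤ) = b - max (b - x) 0 by omega]
    ring
  have hPa := two_mul_sum_range_max_sub (hab.trans hb)
  have hPb := two_mul_sum_range_max_sub hb
  have hPP := six_mul_sum_range_max_sub_mul_max_sub hab (hab.trans hb)
  rw [max_eq_left ha] at hPa hPP
  rw [max_eq_left (ha.trans hab)] at hPb
  simp only [hterm, sum_add_distrib, sum_sub_distrib, ← mul_sum, sum_const, card_range,
    nsmul_eq_mul]
  linear_combination (-3 * a) * hPb + (-3 * b) * hPa + hPP

lemma six_mul_sum_range_min_mul_min_reflect (ha0 : 0 ≤ a) (ha : a ≤ n) (hb0 : 0 ≤ b)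
    (hb : b ≤ n) :
    6 * ∑ x ∈ range n, min a x * min b (n - 1 - x)
      = 6 * n * a * b - 3 * a * b * (b + 1) - 3 * b * a * (a + 1)
        + max (a + b - n) 0 * (max (a + b - n) 0 + 1) * (max (a + b - n) 0 + 2) := by
  set c : ℤ := n - 1 - b with hc
  -- `(x - c)⁺ = (x - c) + (c - x)⁺` trades the opposite-facing hinge product `(a - x)⁺ (x - c)⁺`
  -- for the same-facing one `(a - x)⁺ (c - x)⁺`.
  have hterm (x : ℕ) : min a x * min b (n - 1 - x)
      = a * b - a * max (b - (n - 1 - x)) 0 - b * max (a - x) 0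
        + (a - c) * max (a - x) 0 - max (a - x) 0 * max (a - x) 0
        + max (a - x) 0 * max (c - x) 0 := by
    have hsq : max (a - x) 0 * (a - x) = max (a - x) 0 * max (a - x) 0 := by
      rcases le_total (a - x) 0 with h | h
      · rw [max_eq_right h]; ring
      · rw [max_eq_left h]
    have hq : max (b - (n - 1 - x)) 0 = (x - c) + max (c - x) 0 := by omega
    rw [show min a (x : ℤ) = a - max (a - x) 0 by omega,
      show min b (n - 1 - x : ℤ) = b - max (b - (n - 1 - x)) 0 by omega]
    linear_combination max (a - x) 0 * hq - hsq
  have hPa := two_mul_sum_range_max_sub ha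
  have hPb := two_mul_sum_range_max_sub hb
  have hPP := six_mul_sum_range_max_sub_mul_max_sub le_rfl ha
  have hreflect := sum_range_reflect_int n fun y => max (b - y) 0
  simp only [hterm, sum_add_distrib, sum_sub_distrib, ← mul_sum, sum_const, card_range,
    nsmul_eq_mul, hreflect]
  rw [max_eq_left ha0] at hPa hPP
  rw [max_eq_left hb0] at hPb
  rcases le_or_gt a c with hac | hca
  · have hPQ := six_mul_sum_range_max_sub_mul_max_sub hac ha
    rw [max_eq_left ha0] at hPQ
    rw [max_eq_right (show a + b - n ≤ 0 by omega)]
    linear_combination (-3 * a) * hPb + (-3 * b + 3 * (a - c)) * hPa - hPP + hPQ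
  · have hPQ := six_mul_sum_range_max_sub_mul_max_sub hca.le (show c ≤ n by omega)
    have hc' : max c 0 * (max c 0 + 1) * (3 * a - max c 0 + 1)
        = c * (c + 1) * (3 * a - c + 1) := by
      obtain h | h : c = -1 ∨ 0 ≤ c := by omega
      · rw [h]; norm_num
      · rw [max_eq_left h]
    rw [sum_congr rfl fun (x : ℕ) _ => mul_comm (max (c - x) 0) (max (a - x) 0)] at hPQ
    rw [max_eq_left (show 0 ≤ a + b - n by omega)]
    linear_combination (-3 * a) * hPb + (-3 * b + 3 * (a - c)) * hPa - hPP + hPQ + hc'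

end MinSums

/-- For `0 ≤ x < n` and `0 ≤ a`, the number of `y ∈ {0, …, n - 1}` with `0 < |x - y| ≤ a`. -/
def windowCount (n : ℕ) (a x : ℤ) : ℤ := min a x + min a (n - 1 - x)

section WindowCount

variable {n : ℕ} {a b : ℤ}

lemma sum_windowCount_mul_windowCount :
    ∑ x ∈ range n, windowCount n a x * windowCount n b x
      = 2 * ∑ x ∈ range n, min a x * min b x
        + 2 * ∑ x ∈ range n, min a x * min b (n - 1 - x) := by
  have hRR := sum_range_reflect_int n fun y => min a y * min b y
  have hRL := sum_range_reflect_int n fun y => min a (n - 1 - y) * min b y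
  simp only [sub_sub_cancel] at hRL
  simp only [windowCount, add_mul, mul_add, sum_add_distrib, ← hRR, hRL]
  ring

lemma six_mul_sum_windowCount_mul_windowCount (ha : 0 ≤ a) (hab : a ≤ b) (hb : b ≤ n) :
    6 * ∑ x ∈ range n, windowCount n a x * windowCount n b x
      = 24 * n * a * b - 12 * a * b * (b + 1) - 12 * b * a * (a + 1)
        + 2 * a * (a + 1) * (3 * b - a + 1)
        + 2 * max (a + b - n) 0 * (max (a + b - n) 0 + 1) * (max (a + b - n) 0 + 2) := by
  rw [sum_windowCount_mul_windowCount]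
  linear_combination 2 * six_mul_sum_range_min_mul_min ha hab hb
    + 2 * six_mul_sum_range_min_mul_min_reflect ha (hab.trans hb) (ha.trans hab) hb

end WindowCount

lemma mul_sum_nu_mul_nu {n : ℕ} (hn : 2 ≤ n) (s t : ℝ) :
    (n : ℝ) * ∑ i ∈ Icc 1 n, nu n i s * nu n i t
      = 4 * ((∑ x ∈ range n, windowCount n ⌊n * s⌋ x * windowCount n ⌊n * t⌋ x : ℤ) : ℝ)
        / (n * (n - 1) ^ 2) := by
  have hnu (x : ℕ) (r : ℝ) : nu n (1 + x) r = 2 * windowCount n ⌊n * r⌋ x / (n ^ 2 - n) := by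
    simp only [nu, windowCount]
    push_cast
    ring_nf
  have hn0 : (n : ℝ) ≠ 0 := by positivity
  have hn1 : (n : ℝ) - 1 ≠ 0 := by
    have : (2 : ℝ) ≤ n := by exact_mod_cast hn
    linarith
  rw [← Ico_add_one_right_eq_Icc, sum_Ico_eq_sum_range, add_tsub_cancel_right]
  simp only [hnu]
  push_cast
  rw [mul_sum, mul_sum, sum_div]
  refine sum_congr rfl fun x _ => ?_
  field_simp
  ring

lemma abs_four_mul_div_sub_le {n S G E c : ℝ} (hn : 2 ≤ n) (hS : 4 * S = n ^ 3 * G + E)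
    (hG : |G| ≤ c) (hE : |E| ≤ c * n ^ 2) :
    |4 * S / (n * (n - 1) ^ 2) - G| ≤ 12 * c / n := by
  have hn1 : 0 < n - 1 := by linarith
  have hden : 0 < n * (n - 1) ^ 2 := by positivity
  have hsplit :
      4 * S / (n * (n - 1) ^ 2) - G = ((2 * n ^ 2 - n) * G + E) / (n * (n - 1) ^ 2) := by
    rw [eq_div_iff hden.ne', sub_mul, div_mul_cancel₀ _ hden.ne']
    linear_combination hS
  have hnum : |(2 * n ^ 2 - n) * G + E| ≤ 3 * c * n ^ 2 := by
    calc |(2 * n ^ 2 - n) * G + E| ≤ (2 * n ^ 2 - n) * |G| + |E| := by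
          refine (abs_add_le _ _).trans ?_
          rw [abs_mul, abs_of_nonneg (by nlinarith)]
      _ ≤ 3 * c * n ^ 2 := by nlinarith [abs_nonneg G]
  rw [hsplit, abs_div, abs_of_pos hden, div_le_div_iff₀ hden (by linarith)]
  have hc : 0 ≤ c := (abs_nonneg G).trans hG
  have hsq : n ^ 2 ≤ 4 * (n - 1) ^ 2 := by nlinarith
  nlinarith [mul_le_mul_of_nonneg_right hnum (by linarith : (0:ℝ) ≤ n),
    mul_le_mul_of_nonneg_left hsq (by positivity : 0 ≤ 3 * c * n)]

noncomputable def gamPoly (s t : ℝ) : ℝ := 4 * s * (4 * t - 2 * t ^ 2 - s * t - s ^ 2 / 3)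

/-- The two branches of `Gam` differ by `4/3 (s + t - 1)³`. -/
noncomputable def gamUpper (s t : ℝ) : ℝ := gamPoly s t + 4 / 3 * max (s + t - 1) 0 ^ 3

lemma Gam_comm (s t : ℝ) : Gam s t = Gam t s := by
  rcases lt_trichotomy s t with h | rfl | h
  · simp [Gam, h.le, not_le.mpr h]
  · rfl
  · simp [Gam, h.le, not_le.mpr h]

lemma Gam_eq_gamUpper {s t : ℝ} (hst : s ≤ t) : Gam s t = gamUpper s t := by
  simp only [Gam, gamUpper, gamPoly, if_pos hst]
  split_ifs with h
  · rw [max_eq_right (by linarith)]; ring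
  · rw [max_eq_left (by linarith)]; ring

lemma abs_gamUpper_le {s t : ℝ} (hs : s ∈ Set.Icc (0 : ℝ) 1) (ht : t ∈ Set.Icc (0 : ℝ) 1) :
    |gamUpper s t| ≤ 18 := by
  obtain ⟨hs0, hs1⟩ := hs
  obtain ⟨ht0, ht1⟩ := ht
  set w := max (s + t - 1) 0
  have hw0 : 0 ≤ w := le_max_right _ _
  have hw3 : w ^ 3 ≤ 1 := pow_le_one₀ hw0 (max_le (by linarith) zero_le_one)
  rw [gamUpper, gamPoly, abs_le]
  constructor <;> nlinarith [mul_nonneg hs0 ht0, mul_nonneg (mul_nonneg hs0 hs0) hs0,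
    mul_nonneg (mul_nonneg hs0 ht0) ht0, mul_nonneg (mul_nonneg hs0 hs0) ht0, pow_nonneg hw0 3]

lemma abs_gamPoly_sub_le {s t σ τ h : ℝ} (hs : s ∈ Set.Icc (0 : ℝ) 1)
    (ht : t ∈ Set.Icc (0 : ℝ) 1) (hσ : σ ∈ Set.Icc (0 : ℝ) 1) (hτ : τ ∈ Set.Icc (0 : ℝ) 1)
    (hsσ : |s - σ| ≤ h) (htτ : |t - τ| ≤ h) :
    |gamPoly s t - gamPoly σ τ| ≤ 72 * h := by
  obtain ⟨hs0, hs1⟩ := hs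
  obtain ⟨ht0, ht1⟩ := ht
  obtain ⟨hσ0, hσ1⟩ := hσ
  obtain ⟨hτ0, hτ1⟩ := hτ
  have hh : 0 ≤ h := (abs_nonneg _).trans hsσ
  set P := 16 * t - 8 * t ^ 2 - 4 * t * (s + σ) - 4 / 3 * (s ^ 2 + s * σ + σ ^ 2) with hPdef
  set Q := 16 * σ - 8 * σ * (t + τ) - 4 * σ ^ 2 with hQdef
  have hP : |P| ≤ 36 := by
    rw [abs_le, hPdef]
    constructor <;> nlinarith [mul_nonneg hs0 hσ0, mul_nonneg ht0 hs0, mul_nonneg ht0 hσ0]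
  have hQ : |Q| ≤ 36 := by
    rw [abs_le, hQdef]
    constructor <;> nlinarith [mul_nonneg hσ0 ht0, mul_nonneg hσ0 hτ0]
  have hsplit : gamPoly s t - gamPoly σ τ = (s - σ) * P + (t - τ) * Q := by
    rw [gamPoly, gamPoly]; ring
  calc |gamPoly s t - gamPoly σ τ| ≤ |s - σ| * |P| + |t - τ| * |Q| := by
        rw [hsplit, ← abs_mul, ← abs_mul]; exact abs_add_le _ _
    _ ≤ h * 36 + h * 36 := by gcongr
    _ = 72 * h := by ring

lemma abs_pow_three_sub_pow_three_le {p q : ℝ} (hp : |p| ≤ 1) (hq : |q| ≤ 1) :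
    |p ^ 3 - q ^ 3| ≤ 3 * |p - q| := by
  calc |p ^ 3 - q ^ 3| ≤ |p - q| * 3 * max |p| |q| ^ 2 := by
        exact_mod_cast abs_pow_sub_pow_le p q 3
    _ ≤ |p - q| * 3 * 1 := by
        gcongr
        exact pow_le_one₀ (le_max_of_le_left (abs_nonneg p)) (max_le hp hq)
    _ = 3 * |p - q| := by ring

lemma abs_gamUpper_sub_le {s t σ τ h : ℝ} (hs : s ∈ Set.Icc (0 : ℝ) 1)
    (ht : t ∈ Set.Icc (0 : ℝ) 1) (hσ : σ ∈ Set.Icc (0 : ℝ) 1) (hτ : τ ∈ Set.Icc (0 : ℝ) 1)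
    (hsσ : |s - σ| ≤ h) (htτ : |t - τ| ≤ h) :
    |gamUpper s t - gamUpper σ τ| ≤ 80 * h := by
  have hunit {x y : ℝ} (hx : x ∈ Set.Icc (0 : ℝ) 1) (hy : y ∈ Set.Icc (0 : ℝ) 1) :
      |max (x + y - 1) 0| ≤ 1 :=
    abs_le.mpr ⟨by linarith [le_max_right (x + y - 1) 0],
      max_le (by linarith [hx.2, hy.2]) zero_le_one⟩
  have hmax : |max (s + t - 1) 0 - max (σ + τ - 1) 0| ≤ 2 * h := by
    refine (abs_max_sub_max_le_abs _ _ _).trans ?_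
    calc |s + t - 1 - (σ + τ - 1)| = |(s - σ) + (t - τ)| := by ring_nf
      _ ≤ |s - σ| + |t - τ| := abs_add_le _ _
      _ ≤ 2 * h := by linarith
  have hcube := abs_pow_three_sub_pow_three_le (hunit hs ht) (hunit hσ hτ)
  calc |gamUpper s t - gamUpper σ τ|
      = |(gamPoly s t - gamPoly σ τ)
          + 4 / 3 * (max (s + t - 1) 0 ^ 3 - max (σ + τ - 1) 0 ^ 3)| := by
        rw [gamUpper, gamUpper]; ring_nf
    _ ≤ 72 * h + 4 / 3 * (3 * (2 * h)) := by
        refine (abs_add_le _ _).trans (add_le_add (abs_gamPoly_sub_le hs ht hσ hτ hsσ htτ) ?_)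
        rw [abs_mul, abs_of_pos (by norm_num : (0 : ℝ) < 4 / 3)]
        gcongr
        linarith
    _ = 80 * h := by ring

lemma four_mul_sum_windowCount_mul_windowCount_eq {n : ℕ} (hn : 0 < n) {a b M : ℤ}
    (ha : 0 ≤ a) (hab : a ≤ b) (hb : b ≤ n) (hM : M = max (a + b - n) 0) :
    4 * ((∑ x ∈ range n, windowCount n a x * windowCount n b x : ℤ) : ℝ)
      = n ^ 3 * gamUpper (a / n) (b / n) + (4 / 3 * a + 4 * M ^ 2 + 8 / 3 * M - 12 * a * b) := by
  have hn' : (0 : ℝ) < n := by exact_mod_cast hn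
  have hclosed := congrArg (Int.cast : ℤ → ℝ) (six_mul_sum_windowCount_mul_windowCount ha hab hb)
  rw [← hM] at hclosed
  push_cast at hclosed
  have hmax : max ((a : ℝ) / n + b / n - 1) 0 = M / n := by
    have e : (a : ℝ) / n + b / n - 1 = ((a + b - n : ℤ) : ℝ) / n := by
      push_cast
      field_simp
    rw [e, hM, Int.cast_max, Int.cast_zero, ← max_div_div_right hn'.le, zero_div]
  rw [gamUpper, gamPoly, hmax]
  field_simp
  push_cast
  linear_combination 2 * hclosed

lemma floor_mul_div_mem_Icc {n r : ℝ} (hn : 0 < n) (hr : r ∈ Set.Icc (0 : ℝ) 1) :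
    (⌊n * r⌋ : ℝ) / n ∈ Set.Icc (0 : ℝ) 1 := by
  have h0 : (0 : ℝ) ≤ ⌊n * r⌋ := by exact_mod_cast Int.floor_nonneg.mpr (by nlinarith [hr.1])
  have h1 : (⌊n * r⌋ : ℝ) ≤ n := (Int.floor_le _).trans (by nlinarith [hr.2])
  exact ⟨div_nonneg h0 hn.le, (div_le_one hn).mpr h1⟩

lemma abs_sub_floor_mul_div_le {n r : ℝ} (hn : 0 < n) :
    |r - ⌊n * r⌋ / n| ≤ 1 / n := by
  have e : r - ⌊n * r⌋ / n = Int.fract (n * r) / n := by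
    rw [Int.fract]
    field_simp
  rw [e, abs_div, abs_of_pos hn, abs_of_nonneg (Int.fract_nonneg _)]
  exact div_le_div_of_nonneg_right (Int.fract_lt_one _).le hn.le

lemma abs_mul_sum_nu_mul_nu_sub_gamUpper_le {n : ℕ} (hn : 2 ≤ n) {s t : ℝ} (hs0 : 0 ≤ s)
    (hst : s ≤ t) (ht1 : t ≤ 1) :
    |(n : ℝ) * ∑ i ∈ Icc 1 n, nu n i s * nu n i t - gamUpper s t| ≤ 296 / (n : ℝ) := by
  have hnR : (2 : ℝ) ≤ n := by exact_mod_cast hn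
  have hn0 : (0 : ℝ) < n := by linarith
  have hs : s ∈ Set.Icc (0 : ℝ) 1 := ⟨hs0, hst.trans ht1⟩
  have ht : t ∈ Set.Icc (0 : ℝ) 1 := ⟨hs0.trans hst, ht1⟩
  set a := ⌊(n : ℝ) * s⌋
  set b := ⌊(n : ℝ) * t⌋
  have ha : 0 ≤ a := Int.floor_nonneg.mpr (by positivity)
  have hab : a ≤ b := Int.floor_le_floor (by gcongr)
  have hb : b ≤ n := by
    have : (b : ℝ) ≤ n := (Int.floor_le _).trans (by nlinarith)
    exact_mod_cast this
  set M := max (a + b - n) 0 with hM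
  have hexact := four_mul_sum_windowCount_mul_windowCount_eq (by omega) ha hab hb hM
  have hrem : |4 / 3 * (a : ℝ) + 4 * M ^ 2 + 8 / 3 * M - 12 * a * b| ≤ 18 * (n : ℝ) ^ 2 := by
    have haR : (0 : ℝ) ≤ a := by exact_mod_cast ha
    have habR : (a : ℝ) ≤ b := by exact_mod_cast hab
    have hbR : (b : ℝ) ≤ n := by exact_mod_cast hb
    have hM0 : (0 : ℝ) ≤ M := by exact_mod_cast le_max_right _ _
    have hMn : (M : ℝ) ≤ n := by exact_mod_cast (show M ≤ n by omega)
    rw [abs_le]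
    constructor <;> nlinarith [mul_le_mul (habR.trans hbR) hbR (haR.trans habR) hn0.le,
      mul_le_mul hMn hMn hM0 hn0.le]
  have hdisc := abs_four_mul_div_sub_le hnR hexact
    (abs_gamUpper_le (floor_mul_div_mem_Icc hn0 hs) (floor_mul_div_mem_Icc hn0 ht)) hrem
  have hlip := abs_gamUpper_sub_le hs ht (floor_mul_div_mem_Icc hn0 hs)
    (floor_mul_div_mem_Icc hn0 ht) (abs_sub_floor_mul_div_le hn0) (abs_sub_floor_mul_div_le hn0)
  rw [mul_sum_nu_mul_nu hn]
  calc _ ≤ 12 * 18 / (n : ℝ) + 80 * (1 / (n : ℝ)) := by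
        rw [abs_sub_comm (gamUpper s t)] at hlip
        exact (abs_sub_le _ _ _).trans (add_le_add hdisc hlip)
    _ = 296 / (n : ℝ) := by ring

theorem covariance_approximation :
    ∃ C : ℝ, 0 < C ∧ ∀ n : ℕ, 2 ≤ n → ∀ s ∈ Set.Icc (0:ℝ) 1, ∀ t ∈ Set.Icc (0:ℝ) 1,
      |(n : ℝ) * (∑ i ∈ Finset.Icc 1 n, nu n i s * nu n i t) - Gam s t| ≤ C * (n : ℝ)⁻¹ := by
  refine ⟨296, by norm_num, fun n hn s hs t ht => ?_⟩
  rw [← div_eq_mul_inv]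
  rcases le_total s t with hst | hts
  · rw [Gam_eq_gamUpper hst]
    exact abs_mul_sum_nu_mul_nu_sub_gamUpper_le hn hs.1 hst ht.2
  · rw [Gam_comm, Gam_eq_gamUpper hts, sum_congr rfl fun i _ => mul_comm (nu n i s) _]
    exact abs_mul_sum_nu_mul_nu_sub_gamUpper_le hn ht.1 hts hs.2
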